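/- (Theorem 1, Case 3.) Fix an altitude ĥ > 0 and assume X > 0, SIR1(0,ĥ) ≥ SIR2(0,ĥ), Ψˣ(ĥ) ≥ D, and SIR2(D,ĥ) < SIR1(D,ĥ). Then SIR1(x,ĥ) > SIR2(x,ĥ) for every x ∈ [0,D] (so there is no crossing point), and SIR_S(x,ĥ) ≤ SIR_S(D,ĥ) for every x ∈ [0,D]; that is, the optimal horizontal position is x* = D. -/
import Mathlib


/-- SIR at the UAV located at (x,0,h). -/
noncomputable def SIR1 (pt pM X Y x h : ℝ) : ℝ :=
  pt * ((x - X) ^ 2 + Y ^ 2 + h ^ 2) / (pM * (x ^ 2 + h ^ 2))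

/-- SIR at the Rx when the UAV is located at (x,0,h). -/
noncomputable def SIR2 (pu κ pM D X Y x h : ℝ) : ℝ :=
  pu * κ * (Y ^ 2 + (D - X) ^ 2) / (pM * ((D - x) ^ 2 + h ^ 2))

/-- SIR of the system. -/
noncomputable def SIRS (pt pu κ pM D X Y x h : ℝ) : ℝ :=
  min (SIR1 pt pM X Y x h) (SIR2 pu κ pM D X Y x h)

/-- The horizontal stationary point Ψˣ(h). -/
noncomputable def PsiX (X Y h : ℝ) : ℝ :=
  (X ^ 2 + Y ^ 2 + Real.sqrt ((X ^ 2 + Y ^ 2) ^ 2 + 4 * X ^ 2 * h ^ 2)) / (2 * X)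

theorem stmt8 (D X Y pt pu pM κ : ℝ) (hD : 0 < D) (hX0 : 0 ≤ X) (hXD : X ≤ D)
    (hpt : 0 < pt) (hpu : 0 < pu) (hpM : 0 < pM) (hκ : 0 < κ)
    (hhat : ℝ) (hhat_pos : 0 < hhat) (hX : 0 < X)
    (hc1 : SIR1 pt pM X Y 0 hhat ≥ SIR2 pu κ pM D X Y 0 hhat)
    (hc2 : PsiX X Y hhat ≥ D)
    (hc3 : SIR2 pu κ pM D X Y D hhat < SIR1 pt pM X Y D hhat) :
    ∀ x ∈ Set.Icc (0 : ℝ) D,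
      SIR1 pt pM X Y x hhat > SIR2 pu κ pM D X Y x hhat ∧
      SIRS pt pu κ pM D X Y x hhat ≤ SIRS pt pu κ pM D X Y D hhat := by
  intro x hx
  obtain ⟨hx0, hxD⟩ := hx
  have hh2 : (0:ℝ) < hhat ^ 2 := by positivity
  -- Key consequence of PsiX ≥ D
  have hK : X * D ^ 2 ≤ D * (X ^ 2 + Y ^ 2) + X * hhat ^ 2 := by
    have hs0 : (0:ℝ) ≤ (X ^ 2 + Y ^ 2) ^ 2 + 4 * X ^ 2 * hhat ^ 2 := by positivity
    set s := Real.sqrt ((X ^ 2 + Y ^ 2) ^ 2 + 4 * X ^ 2 * hhat ^ 2) with hsdef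
    have hsq : s ^ 2 = (X ^ 2 + Y ^ 2) ^ 2 + 4 * X ^ 2 * hhat ^ 2 := Real.sq_sqrt hs0
    have hsnn : 0 ≤ s := Real.sqrt_nonneg _
    have hs1 : X ^ 2 + Y ^ 2 ≤ s := by
      nlinarith [sq_nonneg (s - (X ^ 2 + Y ^ 2)), sq_nonneg (s + (X ^ 2 + Y ^ 2))]
    have hst : 2 * X * D - (X ^ 2 + Y ^ 2) ≤ s := by
      unfold PsiX at hc2
      rw [ge_iff_le, le_div_iff₀ (by positivity)] at hc2
      linarith
    nlinarith [mul_nonneg (sub_nonneg.2 hst)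
      (show (0:ℝ) ≤ s + (2 * X * D - (X ^ 2 + Y ^ 2)) by nlinarith)]
  have hDx : (0:ℝ) ≤ D - x := by linarith
  -- SIR1 is decreasing on [0, D]
  have hS1 : SIR1 pt pM X Y D hhat ≤ SIR1 pt pM X Y x hhat := by
    unfold SIR1
    rw [div_le_div_iff₀ (by positivity) (by positivity)]
    have hG0 : (0:ℝ) ≤ D * (X ^ 2 + Y ^ 2) + 2 * X * hhat ^ 2 := by positivity
    have hGD : (0:ℝ) ≤ 2 * (D * (X ^ 2 + Y ^ 2) + X * hhat ^ 2 - X * D ^ 2) := by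
      linarith
    have hcomb : (0:ℝ) ≤ (D - x) * (D * (X ^ 2 + Y ^ 2) + 2 * X * hhat ^ 2)
        + x * (2 * (D * (X ^ 2 + Y ^ 2) + X * hhat ^ 2 - X * D ^ 2)) :=
      add_nonneg (mul_nonneg hDx hG0) (mul_nonneg hx0 hGD)
    nlinarith [mul_nonneg (mul_nonneg (mul_pos hpt hpM).le hDx) hcomb]
  -- SIR2 is increasing on [0, D]
  have hS2 : SIR2 pu κ pM D X Y x hhat ≤ SIR2 pu κ pM D X Y D hhat := by
    unfold SIR2
    rw [div_le_div_iff₀ (by positivity) (by positivity)]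
    have hN : (0:ℝ) ≤ pu * κ * (Y ^ 2 + (D - X) ^ 2) := by positivity
    nlinarith [mul_nonneg (mul_nonneg hN hpM.le) (sq_nonneg (D - x))]
  refine ⟨by linarith, ?_⟩
  calc SIRS pt pu κ pM D X Y x hhat ≤ SIR2 pu κ pM D X Y x hhat := min_le_right _ _
    _ ≤ SIR2 pu κ pM D X Y D hhat := hS2
    _ = SIRS pt pu κ pM D X Y D hhat := (min_eq_right hc3.le).symm
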